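/- Let γ > 0, let η : [0,∞) → ℝ satisfy η(1) = −1 and η(z) ≥ −z^{1+γ} for all z ≥ 0, and let ξ : (0,∞) → (0,∞) be such that ψ(z) = log ξ(e^z) is strictly increasing and convex on ℝ. Then for all g, f ∈ F_γ with ⟨g f^γ⟩ > 0, the ξ-Hölder divergence is nonnegative: D_{η,ξ,γ}(g,f) = η(ξ(⟨g f^γ⟩)/ξ(⟨f^{1+γ}⟩)) · ξ(⟨f^{1+γ}⟩) + ξ(⟨g^{1+γ}⟩) ≥ 0. -/

import Mathlib

/-!
Hölder's inequality with exponents `1 + γ` and `(1 + γ)/γ` gives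
`⟨g f^γ⟩ ≤ ⟨g^{1+γ}⟩^{1/(1+γ)} ⟨f^{1+γ}⟩^{γ/(1+γ)}`. Since `log ∘ ξ ∘ exp` is monotone and convex,
`ξ` is monotone and geometrically convex, so the same inequality survives applying `ξ`:
`ξ(⟨g f^γ⟩)^{1+γ} ≤ ξ(⟨g^{1+γ}⟩) ξ(⟨f^{1+γ}⟩)^γ`. With `η(z) ≥ -z^{1+γ}` this is exactly the claim.
-/

open MeasureTheory

/-- Membership in the class `F_γ`: measurable, not a.e. zero, with `⟨g^{1+γ}⟩ < ∞`. -/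
def MemF {X : Type*} [MeasurableSpace X] (ν : Measure X) (γ : ℝ) (g : X → NNReal) : Prop :=
  Measurable g ∧ ¬ (g =ᵐ[ν] 0) ∧ (∫⁻ x, (g x : ENNReal) ^ (1 + γ) ∂ν) ≠ ⊤

open scoped ENNReal NNReal

namespace MeasureTheory

variable {X : Type*} [MeasurableSpace X] {ν : Measure X}

theorem lintegral_coe_rpow_ne_zero {g : X → ℝ≥0} (hg : Measurable g) (hg0 : ¬ g =ᵐ[ν] 0)
    {p : ℝ} (hp : 0 < p) : ∫⁻ x, (g x : ℝ≥0∞) ^ p ∂ν ≠ 0 := by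
  intro h
  refine hg0 ?_
  filter_upwards [(lintegral_eq_zero_iff (hg.coe_nnreal_ennreal.pow_const p)).mp h] with x hx
  simpa [ENNReal.rpow_eq_zero_iff, hp, not_lt_of_gt hp] using hx

theorem MemF.toReal_lintegral_rpow_pos {γ : ℝ} (hγ : 0 < 1 + γ) {g : X → ℝ≥0} (hg : MemF ν γ g) :
    0 < (∫⁻ x, (g x : ℝ≥0∞) ^ (1 + γ) ∂ν).toReal :=
  ENNReal.toReal_pos (lintegral_coe_rpow_ne_zero hg.1 hg.2.1 hγ) hg.2.2

/-- Hölder's inequality with conjugate exponents `1 + γ` and `(1 + γ) / γ`. -/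
theorem lintegral_mul_rpow_le {γ : ℝ} (hγ : 0 < γ) {g f : X → ℝ≥0∞}
    (hg : AEMeasurable g ν) (hf : AEMeasurable f ν) :
    ∫⁻ x, g x * f x ^ γ ∂ν ≤
      (∫⁻ x, g x ^ (1 + γ) ∂ν) ^ (1 / (1 + γ)) * (∫⁻ x, f x ^ (1 + γ) ∂ν) ^ (γ / (1 + γ)) := by
  have hpq : Real.HolderConjugate (1 + γ) ((1 + γ) / γ) := by
    rw [Real.holderConjugate_iff]
    exact ⟨by linarith, by field_simp⟩
  have hf_pow : ∀ x, (f x ^ γ) ^ ((1 + γ) / γ) = f x ^ (1 + γ) := fun x => by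
    rw [← ENNReal.rpow_mul, mul_div_cancel₀ _ hγ.ne']
  calc ∫⁻ x, g x * f x ^ γ ∂ν
      ≤ (∫⁻ x, g x ^ (1 + γ) ∂ν) ^ (1 / (1 + γ)) *
          (∫⁻ x, (f x ^ γ) ^ ((1 + γ) / γ) ∂ν) ^ (1 / ((1 + γ) / γ)) :=
        ENNReal.lintegral_mul_le_Lp_mul_Lq ν hpq hg (hf.pow_const γ)
    _ = _ := by simp only [hf_pow, one_div_div]

theorem lintegral_mul_rpow_ne_top {γ : ℝ} (hγ : 0 < γ) {g f : X → ℝ≥0∞}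
    (hg : AEMeasurable g ν) (hf : AEMeasurable f ν)
    (hg_fin : ∫⁻ x, g x ^ (1 + γ) ∂ν ≠ ⊤) (hf_fin : ∫⁻ x, f x ^ (1 + γ) ∂ν ≠ ⊤) :
    ∫⁻ x, g x * f x ^ γ ∂ν ≠ ⊤ :=
  ne_top_of_le_ne_top (ENNReal.mul_ne_top (ENNReal.rpow_ne_top_of_nonneg (by positivity) hg_fin)
    (ENNReal.rpow_ne_top_of_nonneg (by positivity) hf_fin)) (lintegral_mul_rpow_le hγ hg hf)

theorem toReal_lintegral_mul_rpow_le {γ : ℝ} (hγ : 0 < γ) {g f : X → ℝ≥0∞}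
    (hg : AEMeasurable g ν) (hf : AEMeasurable f ν)
    (hg_fin : ∫⁻ x, g x ^ (1 + γ) ∂ν ≠ ⊤) (hf_fin : ∫⁻ x, f x ^ (1 + γ) ∂ν ≠ ⊤) :
    (∫⁻ x, g x * f x ^ γ ∂ν).toReal ≤
      (∫⁻ x, g x ^ (1 + γ) ∂ν).toReal ^ (1 / (1 + γ)) *
        (∫⁻ x, f x ^ (1 + γ) ∂ν).toReal ^ (γ / (1 + γ)) := by
  have hbound_fin : (∫⁻ x, g x ^ (1 + γ) ∂ν) ^ (1 / (1 + γ)) *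
      (∫⁻ x, f x ^ (1 + γ) ∂ν) ^ (γ / (1 + γ)) ≠ ⊤ :=
    ENNReal.mul_ne_top (ENNReal.rpow_ne_top_of_nonneg (by positivity) hg_fin)
      (ENNReal.rpow_ne_top_of_nonneg (by positivity) hf_fin)
  simpa only [ENNReal.toReal_mul, ENNReal.toReal_rpow] using
    ENNReal.toReal_mono hbound_fin (lintegral_mul_rpow_le hγ hg hf)

end MeasureTheory

theorem le_rpow_mul_rpow_of_log_comp_exp {ξ : ℝ → ℝ} (hξpos : ∀ z, 0 < z → 0 < ξ z)
    (hψm : Monotone fun z => Real.log (ξ (Real.exp z)))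
    (hψc : ConvexOn ℝ Set.univ fun z => Real.log (ξ (Real.exp z)))
    {a b c s t : ℝ} (ha : 0 < a) (hb : 0 < b) (hc : 0 < c) (hs : 0 ≤ s) (ht : 0 ≤ t)
    (hst : s + t = 1) (habc : a ≤ b ^ s * c ^ t) : ξ a ≤ ξ b ^ s * ξ c ^ t := by
  have hψ : ∀ {x}, 0 < x → Real.log (ξ (Real.exp (Real.log x))) = Real.log (ξ x) :=
    fun hx => by rw [Real.exp_log hx]
  have hlog : Real.log a ≤ s * Real.log b + t * Real.log c := by
    calc Real.log a ≤ Real.log (b ^ s * c ^ t) := Real.log_le_log ha habc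
      _ = s * Real.log b + t * Real.log c := by
        rw [Real.log_mul (by positivity) (by positivity), Real.log_rpow hb, Real.log_rpow hc]
  have hb' := hξpos b hb
  have hc' := hξpos c hc
  rw [← Real.log_le_log_iff (hξpos a ha) (by positivity),
    Real.log_mul (by positivity) (by positivity), Real.log_rpow hb', Real.log_rpow hc',
    ← hψ ha, ← hψ hb, ← hψ hc]
  exact (hψm hlog).trans (hψc.2 (Set.mem_univ _) (Set.mem_univ _) hs ht hst)

theorem div_rpow_one_add_mul_le {γ x y w : ℝ} (hγ : 0 < γ) (hx : 0 < x) (hy : 0 < y)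
    (hw : 0 < w) (hxy : x ≤ w ^ (1 / (1 + γ)) * y ^ (γ / (1 + γ))) :
    (x / y) ^ (1 + γ) * y ≤ w := by
  have h1γ : (0 : ℝ) < 1 + γ := by linarith
  have hpow : x ^ (1 + γ) ≤ w * y ^ γ := by
    calc x ^ (1 + γ) ≤ (w ^ (1 / (1 + γ)) * y ^ (γ / (1 + γ))) ^ (1 + γ) := by gcongr
      _ = w * y ^ γ := by
        rw [Real.mul_rpow (by positivity) (by positivity), ← Real.rpow_mul hw.le,
          ← Real.rpow_mul hy.le, one_div_mul_cancel h1γ.ne', div_mul_cancel₀ _ h1γ.ne',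
          Real.rpow_one]
  calc (x / y) ^ (1 + γ) * y = x ^ (1 + γ) / y ^ γ := by
        rw [Real.div_rpow hx.le hy.le, Real.rpow_add hy, Real.rpow_one]
        field_simp
    _ ≤ w := by rwa [div_le_iff₀ (by positivity)]

theorem xi_holder_divergence_nonneg_general {X : Type*} [MeasurableSpace X] (ν : Measure X)
    (γ : ℝ) (hγ : 0 < γ)
    (η : ℝ → ℝ) (hη : ∀ z : ℝ, 0 ≤ z → η z ≥ -z ^ (1 + γ))
    (ξ : ℝ → ℝ) (hξpos : ∀ z : ℝ, 0 < z → 0 < ξ z)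
    (hψm : StrictMono (fun z : ℝ => Real.log (ξ (Real.exp z))))
    (hψc : ConvexOn ℝ Set.univ (fun z : ℝ => Real.log (ξ (Real.exp z))))
    (g f : X → NNReal) (hg : MemF ν γ g) (hf : MemF ν γ f)
    (hgf : (∫⁻ x, (g x : ENNReal) * (f x : ENNReal) ^ γ ∂ν) ≠ 0) :
    0 ≤ η (ξ ((∫⁻ x, (g x : ENNReal) * (f x : ENNReal) ^ γ ∂ν).toReal) /
            ξ ((∫⁻ x, (f x : ENNReal) ^ (1 + γ) ∂ν).toReal)) *
          ξ ((∫⁻ x, (f x : ENNReal) ^ (1 + γ) ∂ν).toReal)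
        + ξ ((∫⁻ x, (g x : ENNReal) ^ (1 + γ) ∂ν).toReal) := by
  have hgm := hg.1.coe_nnreal_ennreal.aemeasurable (μ := ν)
  have hfm := hf.1.coe_nnreal_ennreal.aemeasurable (μ := ν)
  set a := (∫⁻ x, (g x : ℝ≥0∞) * (f x : ℝ≥0∞) ^ γ ∂ν).toReal
  set b := (∫⁻ x, (f x : ℝ≥0∞) ^ (1 + γ) ∂ν).toReal
  set c := (∫⁻ x, (g x : ℝ≥0∞) ^ (1 + γ) ∂ν).toReal
  have ha : 0 < a :=
    ENNReal.toReal_pos hgf (lintegral_mul_rpow_ne_top hγ hgm hfm hg.2.2 hf.2.2)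
  have hb : 0 < b := hf.toReal_lintegral_rpow_pos (by linarith)
  have hc : 0 < c := hg.toReal_lintegral_rpow_pos (by linarith)
  have hξ : ξ a ≤ ξ c ^ (1 / (1 + γ)) * ξ b ^ (γ / (1 + γ)) :=
    le_rpow_mul_rpow_of_log_comp_exp hξpos hψm.monotone hψc ha hc hb (by positivity)
      (by positivity) (by field_simp) (toReal_lintegral_mul_rpow_le hγ hgm hfm hg.2.2 hf.2.2)
  have hξb := hξpos b hb
  calc 0 ≤ -(ξ a / ξ b) ^ (1 + γ) * ξ b + ξ c := by
        linarith [div_rpow_one_add_mul_le hγ (hξpos a ha) hξb (hξpos c hc) hξ]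
    _ ≤ η (ξ a / ξ b) * ξ b + ξ c := by
        gcongr
        exact hη _ (div_nonneg (hξpos a ha).le hξb.le)

theorem xi_holder_divergence_nonneg {X : Type*} [MeasurableSpace X] (ν : Measure X)
    (γ : ℝ) (hγ : 0 < γ)
    (η : ℝ → ℝ) (hη1 : η 1 = -1) (hη : ∀ z : ℝ, 0 ≤ z → η z ≥ -z ^ (1 + γ))
    (ξ : ℝ → ℝ) (hξpos : ∀ z : ℝ, 0 < z → 0 < ξ z)
    (hψm : StrictMono (fun z : ℝ => Real.log (ξ (Real.exp z))))
    (hψc : ConvexOn ℝ Set.univ (fun z : ℝ => Real.log (ξ (Real.exp z))))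
    (g f : X → NNReal) (hg : MemF ν γ g) (hf : MemF ν γ f)
    (hgf : (∫⁻ x, (g x : ENNReal) * (f x : ENNReal) ^ γ ∂ν) ≠ 0) :
    0 ≤ η (ξ ((∫⁻ x, (g x : ENNReal) * (f x : ENNReal) ^ γ ∂ν).toReal) /
            ξ ((∫⁻ x, (f x : ENNReal) ^ (1 + γ) ∂ν).toReal)) *
          ξ ((∫⁻ x, (f x : ENNReal) ^ (1 + γ) ∂ν).toReal)
        + ξ ((∫⁻ x, (g x : ENNReal) ^ (1 + γ) ∂ν).toReal) :=
  xi_holder_divergence_nonneg_general ν γ hγ η hη ξ hξpos hψm hψc g f hg hf hgf
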